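/- For every composition mu of n, every c in Cr(mu), and every pair (a,b) in S(n) x S(n) with a^{-1}b of ordered cycle type mu, the decoding function delta(c) = u_{c^{-1}c^∨}^{-1} c^{-1} u_{c^{-1}c^∨} satisfies Phi_{delta(c)}(Phi_c(a,b)) = (a,b), where Phi_c(a,b) = (a u_{a^{-1}b} c u_{a^{-1}b}^{-1}, a u_{a^{-1}b} c^∨ u_{a^{-1}b}^{-1}). -/

import Mathlib

open Equiv

/-- Word metric on the symmetric group induced by the set of all transpositions:
`trdist a b` is the minimal number of transpositions whose product is `a⁻¹ * b`. -/
noncomputable def trdist {n : ℕ} (a b : Equiv.Perm (Fin n)) : ℕ :=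
  sInf {k | ∃ l : List (Equiv.Perm (Fin n)), l.length = k ∧ (∀ t ∈ l, t.IsSwap) ∧ l.prod = a⁻¹ * b}

/-- The set of midpoints of `a` and `b`. -/
noncomputable def midpts {n : ℕ} (a b : Equiv.Perm (Fin n)) : Set (Equiv.Perm (Fin n)) :=
  {m | trdist a m + trdist m b = trdist a b ∧ |(trdist a m : ℤ) - (trdist m b : ℤ)| ≤ 1}

/-- The forward cycle on a finite subset: cycles through its elements in increasing order. -/
def fwdCycle {n : ℕ} (s : Finset (Fin n)) : Equiv.Perm (Fin n) :=
  (s.sort (· ≤ ·)).formPerm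

/-- The increasing list of minima of the cycles (orbits, including fixed points) of `p`. -/
noncomputable def cycleMins {n : ℕ} (p : Equiv.Perm (Fin n)) : List (Fin n) :=
  Finset.sort
    (@Finset.filter _ (fun i => ∀ j, p.SameCycle i j → i ≤ j) (Classical.decPred _) Finset.univ) (· ≤ ·)

/-- The number of orbits (cycles, including fixed points) of `p` acting on `Fin n`. -/
noncomputable def cycleCount {n : ℕ} (p : Equiv.Perm (Fin n)) : ℕ :=
  (cycleMins p).length

/-- The ordered cycle type of `p`: the list of cycle (orbit) lengths of `p`,
ordered by increasing cycle minima. -/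
noncomputable def orderedCycleType {n : ℕ} (p : Equiv.Perm (Fin n)) : List ℕ :=
  (cycleMins p).map (fun i =>
    (@Finset.filter _ (fun j => p.SameCycle i j) (Classical.decPred _) Finset.univ).card)

/-- The canonical permutation with ordered cycle type `μ` (starting at offset `off`):
it cyclically permutes the first `μ₁` points in increasing order, then the next `μ₂` points,
and so on. -/
def canonPerm (n : ℕ) : List ℕ → ℕ → Equiv.Perm (Fin n)
  | [], _ => 1
  | m :: rest, off =>
      fwdCycle ((Finset.univ : Finset (Fin n)).filter (fun i => off ≤ i.val ∧ i.val < off + m)) *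
        canonPerm n rest (off + m)

/-- `u` conjugates `p` into `q` and maps the sequence of cycle minima of `p`
to that of `q`, entrywise in order. -/
noncomputable def IsConjugator {n : ℕ} (p q u : Equiv.Perm (Fin n)) : Prop :=
  u * p * u⁻¹ = q ∧ (cycleMins p).map u = cycleMins q

/-- A list of blocks is noncrossing: there are no `a < b < c < d` with `a, c` in one block
and `b, d` in a different block. -/
def NoncrossingList {n : ℕ} (L : List (Finset (Fin n))) : Prop :=
  ¬ ∃ a b c d : Fin n, a < b ∧ b < c ∧ c < d ∧
    ∃ s ∈ L, ∃ t ∈ L, s ≠ t ∧ a ∈ s ∧ c ∈ s ∧ b ∈ t ∧ d ∈ t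

/-- The set of all midpoints of pairs `(a, b) ∈ A × B`. -/
noncomputable def midSet {n : ℕ} (A B : Finset (Equiv.Perm (Fin n))) :
    Finset (Equiv.Perm (Fin n)) :=
  @Finset.filter _ (fun m => ∃ a ∈ A, ∃ b ∈ B, m ∈ midpts a b) (Classical.decPred _) Finset.univ

/-- The distance between two sets of permutations. -/
noncomputable def setDist {n : ℕ} (A B : Finset (Equiv.Perm (Fin n))) : ℕ :=
  sInf {k | ∃ a ∈ A, ∃ b ∈ B, trdist a b = k}

/-- The embedding of the hypercube `Z₂^N` into `S(n)` (for `2N ≤ n`) sending the `i`-th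
standard basis vector to the transposition of `2i` and `2i+1` (0-indexed). -/
def cubeMap (N n : ℕ) (h : 2 * N ≤ n) (x : Fin N → ZMod 2) : Equiv.Perm (Fin n) :=
  ((List.finRange N).map (fun i =>
    if x i = 1 then
      Equiv.swap (⟨2 * i.val, by have := i.isLt; omega⟩ : Fin n)
        ⟨2 * i.val + 1, by have := i.isLt; omega⟩
    else 1)).prod

/-!
In the transposition metric `trdist 1 π = n - #cycles(π)`, so a midpoint `c` of `1` and `P`
splits a minimal factorization `t₁ ⋯ tₖ` of `P` into factorizations `t₁ ⋯ tⱼ = c` and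
`tⱼ₊₁ ⋯ tₖ = c⁻¹ P`. Every product of transpositions satisfies the genus inequality
`n + #cycles(t₁ ⋯ tₖ) ≤ k + 2 · #blocks(t₁, …, tₖ)`, the blocks being those of the partition
generated by the factors. For the minimal factorization it forces the cycles of `P` to be exactly
these blocks; for the reordered product `tⱼ ⋯ t₁ tⱼ₊₁ ⋯ tₖ = c⁻¹ (c⁻¹ P)`, which has the same
blocks, it forces the same cycle partition as `P`. Conjugators matching cycle minima are unique,
so `u_{x⁻¹y} = u_{a⁻¹b} u_{c⁻¹(c⁻¹P)}`, and both decoding identities become computations in the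
group.
-/

namespace Setoid

variable {α : Type*}

lemma card_quotient_le_of_le [Finite α] {S T : Setoid α} (h : S ≤ T) :
    Nat.card (Quotient T) ≤ Nat.card (Quotient S) :=
  Nat.card_le_card_of_surjective (Quotient.map' id fun _ _ hxy => h hxy)
    (Quotient.ind fun x => ⟨⟦x⟧, rfl⟩)

lemma eq_of_le_of_card_quotient_le [Finite α] {S T : Setoid α} (h : S ≤ T)
    (hc : Nat.card (Quotient S) ≤ Nat.card (Quotient T)) : S = T := by
  set f : Quotient S → Quotient T := Quotient.map' id fun _ _ hxy => h hxy
  have hsurj : Function.Surjective f := Quotient.ind fun x => ⟨⟦x⟧, rfl⟩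
  have hinj : Function.Injective f := ((Nat.bijective_iff_surjective_and_card f).mpr
    ⟨hsurj, le_antisymm hc (Nat.card_le_card_of_surjective f hsurj)⟩).injective
  exact le_antisymm h fun x y hxy => Quotient.exact (hinj (Quotient.sound hxy : f ⟦x⟧ = f ⟦y⟧))

lemma card_quotient_bot : Nat.card (Quotient (⊥ : Setoid α)) = Nat.card α :=
  (Nat.card_eq_of_bijective _ ⟨fun _ _ h => Quotient.exact h, Quotient.mk_surjective⟩).symm

def merge (S : Setoid α) (a b : α) : Setoid α where
  r x y := S x y ∨ (S x a ∧ S b y) ∨ (S x b ∧ S a y)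
  iseqv := by
    refine ⟨fun x => .inl (S.refl' x), ?_, ?_⟩
    · rintro x y (h | ⟨h₁, h₂⟩ | ⟨h₁, h₂⟩)
      exacts [.inl (S.symm' h), .inr (.inr ⟨S.symm' h₂, S.symm' h₁⟩),
        .inr (.inl ⟨S.symm' h₂, S.symm' h₁⟩)]
    · rintro x y z (h | ⟨h₁, h₂⟩ | ⟨h₁, h₂⟩) (h' | ⟨h₁', h₂'⟩ | ⟨h₁', h₂'⟩)
      exacts [.inl (S.trans' h h'), .inr (.inl ⟨S.trans' h h₁', h₂'⟩),
        .inr (.inr ⟨S.trans' h h₁', h₂'⟩), .inr (.inl ⟨h₁, S.trans' h₂ h'⟩),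
        .inl (S.trans' h₁ (S.trans' (S.symm' (S.trans' h₂ h₁')) h₂')), .inl (S.trans' h₁ h₂'),
        .inr (.inr ⟨h₁, S.trans' h₂ h'⟩), .inl (S.trans' h₁ h₂'),
        .inl (S.trans' h₁ (S.trans' (S.symm' (S.trans' h₂ h₁')) h₂'))]

lemma le_merge (S : Setoid α) (a b : α) : S ≤ S.merge a b := fun _ _ h => .inl h

lemma merge_rel_left_right (S : Setoid α) (a b : α) : S.merge a b a b :=
  .inr (.inl ⟨S.refl' a, S.refl' b⟩)

lemma merge_eq_self {S : Setoid α} {a b : α} (h : S a b) : S.merge a b = S := by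
  refine le_antisymm ?_ (S.le_merge a b)
  rintro x y (h' | ⟨h₁, h₂⟩ | ⟨h₁, h₂⟩)
  exacts [h', S.trans' h₁ (S.trans' h h₂), S.trans' h₁ (S.trans' (S.symm' h) h₂)]

/-- Away from the class of `b`, the projection to the merged quotient is a bijection. -/
lemma card_quotient_merge_add_one [Finite α] {S : Setoid α} {a b : α} (h : ¬ S a b) :
    Nat.card (Quotient (S.merge a b)) + 1 = Nat.card (Quotient S) := by
  classical
  let f : {q : Quotient S // q ≠ ⟦b⟧} → Quotient (S.merge a b) :=
    fun q => Quotient.map' id (fun _ _ hxy => S.le_merge a b hxy) q.1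
  have hf : Function.Bijective f := by
    constructor
    · rintro ⟨q, hq⟩ ⟨q', hq'⟩ hqq'
      induction q using Quotient.ind with | _ x => ?_
      induction q' using Quotient.ind with | _ y => ?_
      have hx : ¬ S x b := fun hxb => hq (Quotient.sound hxb)
      have hy : ¬ S y b := fun hyb => hq' (Quotient.sound hyb)
      rcases Quotient.exact hqq' with hxy | ⟨-, hby⟩ | ⟨hxb, -⟩
      exacts [Subtype.ext (Quotient.sound hxy), (hy (S.symm' hby)).elim, (hx hxb).elim]
    · refine Quotient.ind fun x => ?_
      by_cases hxb : S x b
      · refine ⟨⟨⟦a⟧, fun hab => h (Quotient.exact hab)⟩, Quotient.sound ?_⟩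
        exact .inr (.inl ⟨S.refl' a, S.symm' hxb⟩)
      · exact ⟨⟨⟦x⟧, fun hx => hxb (Quotient.exact hx)⟩, rfl⟩
  rw [← Nat.card_eq_of_bijective f hf, ← Finite.card_option,
    Nat.card_congr (Equiv.optionSubtypeNe _)]

lemma card_quotient_le_merge_add_one [Finite α] (S : Setoid α) (a b : α) :
    Nat.card (Quotient S) ≤ Nat.card (Quotient (S.merge a b)) + 1 := by
  by_cases h : S a b
  · rw [merge_eq_self h]; omega
  · rw [card_quotient_merge_add_one h]

end Setoid

namespace Equiv.Perm

variable {α : Type*}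

lemma SameCycle.setoid_le_of_forall {f : Perm α} {S : Setoid α} (h : ∀ x, S x (f x)) :
    SameCycle.setoid f ≤ S := by
  rintro x _ ⟨i, rfl⟩
  have step : ∀ j : ℤ, (f ^ (j + 1)) x = f ((f ^ j) x) := fun j => by
    rw [add_comm, zpow_one_add, mul_apply]
  induction i using Int.induction_on with
  | zero => exact S.refl' x
  | succ i ih => rw [step]; exact S.trans' ih (h _)
  | pred i ih =>
    refine S.trans' ih (S.symm' ?_)
    simpa only [← step, sub_add_cancel] using h ((f ^ (-(i : ℤ) - 1)) x)

lemma SameCycle.setoid_mul_le (f g : Perm α) :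
    SameCycle.setoid (f * g) ≤ SameCycle.setoid f ⊔ SameCycle.setoid g :=
  SameCycle.setoid_le_of_forall fun x =>
    (SameCycle.setoid f ⊔ SameCycle.setoid g).trans'
      (le_sup_right (a := SameCycle.setoid f) (sameCycle_apply_right.2 (SameCycle.refl g x)))
      (le_sup_left (b := SameCycle.setoid g) (sameCycle_apply_right.2 (SameCycle.refl f (g x))))

/-- Fixed points count as cycles. -/
noncomputable def numCycles (σ : Perm α) : ℕ := Nat.card (Quotient (SameCycle.setoid σ))

lemma SameCycle.setoid_one : SameCycle.setoid (1 : Perm α) = ⊥ :=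
  Setoid.ext fun _ _ => by simp only [Setoid.bot_def]; exact sameCycle_one

lemma numCycles_one : numCycles (1 : Perm α) = Nat.card α := by
  rw [numCycles, SameCycle.setoid_one, Setoid.card_quotient_bot]

def cycleJoin (l : List (Perm α)) : Setoid α := ⨆ t ∈ l, SameCycle.setoid t

lemma cycleJoin_append_singleton (l : List (Perm α)) (t : Perm α) :
    cycleJoin (l ++ [t]) = cycleJoin l ⊔ SameCycle.setoid t := by
  simp [cycleJoin, iSup_or, iSup_sup_eq]

lemma setoid_prod_le_cycleJoin (l : List (Perm α)) :
    SameCycle.setoid l.prod ≤ cycleJoin l := by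
  induction l using List.reverseRecOn with
  | nil => simp [cycleJoin, SameCycle.setoid_one]
  | append_singleton l t ih =>
    rw [List.prod_append, List.prod_singleton, cycleJoin_append_singleton]
    exact (SameCycle.setoid_mul_le _ t).trans (sup_le_sup_right ih _)

lemma numCycles_le_card [Finite α] (σ : Perm α) : numCycles σ ≤ Nat.card α :=
  Nat.card_le_card_of_surjective _ Quotient.mk_surjective

variable [DecidableEq α]

lemma SameCycle.setoid_swap_le_iff {S : Setoid α} {a b : α} :
    SameCycle.setoid (swap a b) ≤ S ↔ S a b := by
  refine ⟨fun h => h (⟨1, by simp⟩ : (swap a b).SameCycle a b), fun h => ?_⟩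
  refine SameCycle.setoid_le_of_forall fun x => ?_
  rcases eq_or_ne x a with rfl | hxa
  · simpa using h
  rcases eq_or_ne x b with rfl | hxb
  · simpa using S.symm' h
  · rw [swap_apply_of_ne_of_ne hxa hxb]

lemma sup_setoid_swap (S : Setoid α) (a b : α) :
    S ⊔ SameCycle.setoid (swap a b) = S.merge a b := by
  refine le_antisymm (sup_le (S.le_merge a b)
    (SameCycle.setoid_swap_le_iff.mpr (S.merge_rel_left_right a b))) ?_
  set T := S ⊔ SameCycle.setoid (swap a b)
  have hab : T a b := le_sup_right (a := S) (SameCycle.setoid_swap_le_iff.mp le_rfl)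
  have hS : S ≤ T := le_sup_left
  rintro x y (h | ⟨h₁, h₂⟩ | ⟨h₁, h₂⟩)
  exacts [hS h, T.trans' (hS h₁) (T.trans' hab (hS h₂)),
    T.trans' (hS h₁) (T.trans' (T.symm' hab) (hS h₂))]

lemma prod_reverse_of_isSwap {l : List (Perm α)} (hl : ∀ t ∈ l, t.IsSwap) :
    l.reverse.prod = l.prod⁻¹ := by
  rw [List.prod_inv_reverse, List.map_congr_left (g := id) fun t ht => ?_, List.map_id]
  obtain ⟨x, y, -, rfl⟩ := hl t ht
  exact swap_inv x y

variable [Finite α]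

/-- The `σ * swap a b`-orbit of `a` runs through the `σ`-orbit of `b`, which avoids `a`. -/
lemma sameCycle_mul_swap_of_not_sameCycle {σ : Perm α} {a b : α}
    (h : ¬ σ.SameCycle a b) : (σ * swap a b).SameCycle a b := by
  by_contra hτ
  have key : ∀ k : ℕ, ((σ * swap a b) ^ (k + 1)) a = (σ ^ (k + 1)) b := by
    intro k
    induction k with
    | zero => simp
    | succ k ih =>
      have hba : (σ ^ (k + 1)) b ≠ a := fun e => h (SameCycle.symm ⟨(k + 1 : ℕ), e⟩)
      have hbb : (σ ^ (k + 1)) b ≠ b := fun e => hτ ⟨(k + 1 : ℕ), ih.trans e⟩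
      rw [pow_succ', mul_apply, ih, mul_apply, swap_apply_of_ne_of_ne hba hbb, ← mul_apply,
        ← pow_succ']
  have hord := key (orderOf σ - 1)
  rw [Nat.sub_add_cancel (orderOf_pos σ), pow_orderOf_eq_one] at hord
  exact hτ ⟨orderOf σ, hord⟩

lemma SameCycle.setoid_mul_swap_of_not_sameCycle {σ : Perm α} {a b : α}
    (h : ¬ σ.SameCycle a b) :
    SameCycle.setoid (σ * swap a b) = SameCycle.setoid σ ⊔ SameCycle.setoid (swap a b) := by
  set τ := σ * swap a b
  have hswap : SameCycle.setoid (swap a b) ≤ SameCycle.setoid τ :=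
    SameCycle.setoid_swap_le_iff.mpr (sameCycle_mul_swap_of_not_sameCycle h)
  have hσ : SameCycle.setoid σ ≤ SameCycle.setoid τ := by
    have := SameCycle.setoid_mul_le τ (swap a b)
    rwa [mul_swap_mul_self, sup_eq_left.mpr hswap] at this
  exact le_antisymm (SameCycle.setoid_mul_le σ _) (sup_le hσ hswap)

lemma numCycles_mul_swap_add_one {σ : Perm α} {a b : α} (h : ¬ σ.SameCycle a b) :
    numCycles (σ * swap a b) + 1 = numCycles σ := by
  rw [numCycles, SameCycle.setoid_mul_swap_of_not_sameCycle h, sup_setoid_swap]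
  exact Setoid.card_quotient_merge_add_one h

lemma numCycles_le_mul_swap_add_one (σ : Perm α) (a b : α) :
    numCycles σ ≤ numCycles (σ * swap a b) + 1 := by
  have hle := SameCycle.setoid_mul_le σ (swap a b)
  rw [sup_setoid_swap] at hle
  exact (Setoid.card_quotient_le_merge_add_one _ a b).trans
    (Nat.add_le_add_right (Setoid.card_quotient_le_of_le hle) 1)

lemma numCycles_mul_swap_le_add_one (σ : Perm α) (a b : α) :
    numCycles (σ * swap a b) ≤ numCycles σ + 1 := by
  simpa only [mul_swap_mul_self] using numCycles_le_mul_swap_add_one (σ * swap a b) a b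

lemma card_le_length_add_numCycles_prod {l : List (Perm α)} (hl : ∀ t ∈ l, t.IsSwap) :
    Nat.card α ≤ l.length + numCycles l.prod := by
  induction l using List.reverseRecOn with
  | nil => simp [numCycles_one]
  | append_singleton l t ih =>
    obtain ⟨a, b, -, rfl⟩ := hl t (by simp)
    have := ih fun t' ht' => hl t' (by simp [ht'])
    have := numCycles_le_mul_swap_add_one l.prod a b
    simp only [List.prod_append, List.prod_singleton, List.length_append, List.length_singleton]
    omega

/-- Peeling off the fixed point `σ x` of `σ * swap x (σ x)` adds one cycle. -/
lemma exists_swap_factorization (σ : Perm α) : ∃ l : List (Perm α), (∀ t ∈ l, t.IsSwap) ∧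
    l.prod = σ ∧ l.length + numCycles σ = Nat.card α := by
  induction hk : Nat.card α - numCycles σ using Nat.strong_induction_on generalizing σ with
  | _ k ih =>
  by_cases hσ : σ = 1
  · exact ⟨[], by simp, by simp [hσ], by simp [hσ, numCycles_one]⟩
  obtain ⟨x, hx⟩ : ∃ x, σ x ≠ x := not_forall.mp fun h => hσ (Equiv.ext h)
  set τ := σ * swap x (σ x)
  have hfix : τ (σ x) = σ x := by simp [τ]
  have hsplit : numCycles σ + 1 = numCycles τ := by
    have := numCycles_mul_swap_add_one (σ := τ) (a := x) (b := σ x)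
      fun hsc => hx (hsc.eq_of_right hfix).symm
    rwa [mul_swap_mul_self] at this
  have := numCycles_le_card τ
  obtain ⟨l, hl, hprod, hlen⟩ := ih _ (by omega) τ rfl
  refine ⟨l ++ [swap x (σ x)], ?_, ?_, ?_⟩
  · simpa [or_imp, forall_and] using ⟨hl, x, σ x, hx.symm, rfl⟩
  · rw [List.prod_append, List.prod_singleton, hprod, mul_swap_mul_self]
  · simp only [List.length_append, List.length_singleton]
    omega

/-- The genus of the map defined by a factorization into transpositions is nonnegative. -/
lemma card_add_numCycles_prod_le {l : List (Perm α)} (hl : ∀ t ∈ l, t.IsSwap) :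
    Nat.card α + numCycles l.prod ≤ l.length + 2 * Nat.card (Quotient (cycleJoin l)) := by
  induction l using List.reverseRecOn with
  | nil => simp [cycleJoin, numCycles_one, Setoid.card_quotient_bot]; omega
  | append_singleton l t ih =>
    obtain ⟨a, b, -, rfl⟩ := hl t (by simp)
    have := ih fun t' ht' => hl t' (by simp [ht'])
    rw [List.prod_append, List.prod_singleton, cycleJoin_append_singleton, sup_setoid_swap,
      List.length_append, List.length_singleton]
    by_cases hJ : cycleJoin l a b
    · have := numCycles_mul_swap_le_add_one l.prod a b
      rw [Setoid.merge_eq_self hJ]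
      omega
    · have := numCycles_mul_swap_add_one fun h => hJ (setoid_prod_le_cycleJoin l h)
      have := Setoid.card_quotient_merge_add_one hJ
      omega

lemma setoid_prod_eq_cycleJoin {l : List (Perm α)} (hl : ∀ t ∈ l, t.IsSwap)
    (hmin : l.length + numCycles l.prod = Nat.card α) :
    SameCycle.setoid l.prod = cycleJoin l := by
  have := card_add_numCycles_prod_le hl
  exact Setoid.eq_of_le_of_card_quotient_le (setoid_prod_le_cycleJoin l)
    (by rw [← numCycles]; omega)

/-- Both products refine the common `cycleJoin`, which is the cycle partition of the minimal one;
the genus inequality bounds the cycle count of the other by the same number. -/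
lemma setoid_prod_reverse_append {l₁ l₂ : List (Perm α)} (hl : ∀ t ∈ l₁ ++ l₂, t.IsSwap)
    (hmin : (l₁ ++ l₂).length + numCycles (l₁ ++ l₂).prod = Nat.card α) :
    SameCycle.setoid (l₁.reverse ++ l₂).prod = SameCycle.setoid (l₁ ++ l₂).prod := by
  have hJ : cycleJoin (l₁.reverse ++ l₂) = cycleJoin (l₁ ++ l₂) := by simp [cycleJoin]
  have hl' : ∀ t ∈ l₁.reverse ++ l₂, t.IsSwap := fun t ht => hl t (by simpa using ht)
  have hP := setoid_prod_eq_cycleJoin hl hmin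
  have hgenus := card_add_numCycles_prod_le hl'
  rw [hJ, ← hP, ← numCycles, List.length_append, List.length_reverse] at hgenus
  rw [List.length_append] at hmin
  refine Setoid.eq_of_le_of_card_quotient_le ?_ ?_
  · rw [hP, ← hJ]; exact setoid_prod_le_cycleJoin _
  · change numCycles _ ≤ numCycles _; omega

end Equiv.Perm

open Equiv.Perm

section SymmetricGroup

variable {n : ℕ}

lemma trdist_add_numCycles (a b : Perm (Fin n)) : trdist a b + numCycles (a⁻¹ * b) = n := by
  obtain ⟨l, hl, hprod, hlen⟩ := exists_swap_factorization (a⁻¹ * b)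
  have hle : trdist a b ≤ l.length := Nat.sInf_le ⟨l, rfl, hl, hprod⟩
  obtain ⟨l₀, hlen₀, hl₀, hprod₀⟩ : trdist a b ∈ {k | ∃ l : List (Perm (Fin n)),
      l.length = k ∧ (∀ t ∈ l, t.IsSwap) ∧ l.prod = a⁻¹ * b} :=
    Nat.sInf_mem ⟨l.length, l, rfl, hl, hprod⟩
  have hge := card_le_length_add_numCycles_prod hl₀
  rw [hprod₀, hlen₀] at hge
  rw [Nat.card_fin] at hlen hge
  omega

lemma setoid_inv_mul_inv_mul_eq_of_geodesic {c P : Perm (Fin n)}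
    (hgeo : trdist 1 c + trdist c P = trdist 1 P) :
    SameCycle.setoid (c⁻¹ * (c⁻¹ * P)) = SameCycle.setoid P := by
  obtain ⟨l₁, hl₁, hprod₁, hlen₁⟩ := exists_swap_factorization c
  obtain ⟨l₂, hl₂, hprod₂, hlen₂⟩ := exists_swap_factorization (c⁻¹ * P)
  have hl : ∀ t ∈ l₁ ++ l₂, t.IsSwap := by simpa [or_imp, forall_and] using ⟨hl₁, hl₂⟩
  have hprod : (l₁ ++ l₂).prod = P := by rw [List.prod_append, hprod₁, hprod₂, mul_inv_cancel_left]
  have h₁ := trdist_add_numCycles 1 c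
  have h₂ := trdist_add_numCycles c P
  have hP := trdist_add_numCycles 1 P
  rw [inv_one, one_mul] at h₁ hP
  rw [Nat.card_fin] at hlen₁ hlen₂
  have hmin : (l₁ ++ l₂).length + numCycles (l₁ ++ l₂).prod = Nat.card (Fin n) := by
    rw [hprod, List.length_append, Nat.card_fin]; omega
  have := setoid_prod_reverse_append hl hmin
  rwa [List.prod_append, prod_reverse_of_isSwap hl₁, hprod₁, hprod₂, hprod] at this

lemma cycleMins_eq_of_setoid_eq {p q : Perm (Fin n)}
    (h : SameCycle.setoid p = SameCycle.setoid q) : cycleMins p = cycleMins q := by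
  have : p.SameCycle = q.SameCycle := congrArg (fun S : Setoid (Fin n) => S.r) h
  unfold cycleMins
  rw [this]

lemma exists_mem_cycleMins_sameCycle (p : Perm (Fin n)) (j : Fin n) :
    ∃ m ∈ cycleMins p, p.SameCycle m j := by
  classical
  obtain ⟨m, hm, hmin⟩ := Finset.exists_min_image (Finset.univ.filter (p.SameCycle j)) id
    ⟨j, by simp [SameCycle.refl]⟩
  rw [Finset.mem_filter] at hm
  refine ⟨m, ?_, hm.2.symm⟩
  simp only [cycleMins, Finset.mem_sort, Finset.mem_filter, Finset.mem_univ, true_and]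
  exact fun j' hj' => hmin j' (by simpa using hm.2.trans hj')

lemma IsConjugator.unique {p q u v : Perm (Fin n)} (hu : IsConjugator p q u)
    (hv : IsConjugator p q v) : u = v := by
  have hmins : ∀ m ∈ cycleMins p, u m = v m := List.map_inj_left.mp (hu.2.trans hv.2.symm)
  have hshift : ∀ w, IsConjugator p q w → ∀ (i : ℤ) m, w ((p ^ i) m) = (q ^ i) (w m) :=
    fun w hw i m => by rw [← hw.1, conj_zpow]; simp
  ext j
  obtain ⟨m, hm, i, rfl⟩ := exists_mem_cycleMins_sameCycle p j
  rw [hshift u hu, hshift v hv, hmins m hm]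

lemma IsConjugator.mul {p q r u v : Perm (Fin n)} (hv : IsConjugator p q v)
    (hu : IsConjugator p r u) (hq : SameCycle.setoid q = SameCycle.setoid p) :
    IsConjugator p (u * q * u⁻¹) (u * v) := by
  have hconj : SameCycle.setoid (u * q * u⁻¹) = SameCycle.setoid (u * p * u⁻¹) :=
    Setoid.ext fun _ _ => by
      change SameCycle _ _ _ ↔ SameCycle _ _ _
      rw [sameCycle_conj, sameCycle_conj]
      exact Setoid.ext_iff.mp hq _ _
  refine ⟨by rw [← hv.1]; group, ?_⟩
  rw [coe_mul, ← List.map_map, hv.2, cycleMins_eq_of_setoid_eq hq, hu.2, ← hu.1,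
    cycleMins_eq_of_setoid_eq hconj]

end SymmetricGroup

theorem stmt16_general (n : ℕ) (P a b c u u' w x y d : Equiv.Perm (Fin n))
    (hc : c ∈ midpts 1 P)
    (hu : IsConjugator P (a⁻¹ * b) u)
    (hu' : IsConjugator P (c⁻¹ * (c⁻¹ * P)) u')
    (hx : x = a * u * c * u⁻¹) (hy : y = a * u * (c⁻¹ * P) * u⁻¹)
    (hd : d = u'⁻¹ * c⁻¹ * u')
    (hw : IsConjugator P (x⁻¹ * y) w) :
    x * w * d * w⁻¹ = a ∧ x * w * (d⁻¹ * P) * w⁻¹ = b := by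
  have hcycles := setoid_inv_mul_inv_mul_eq_of_geodesic hc.1
  have hxy : x⁻¹ * y = u * (c⁻¹ * (c⁻¹ * P)) * u⁻¹ := by rw [hx, hy]; group
  obtain rfl : w = u * u' := hw.unique (hxy ▸ hu'.mul hu hcycles)
  subst hx hd
  refine ⟨by group, ?_⟩
  calc a * u * c * u⁻¹ * (u * u') * ((u'⁻¹ * c⁻¹ * u')⁻¹ * P) * (u * u')⁻¹
      = a * u * (c * c) * (u' * P * u'⁻¹) * u⁻¹ := by group
    _ = a * (u * P * u⁻¹) := by rw [hu'.1]; group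
    _ = b := by rw [hu.1]; group

theorem stmt16 (n : ℕ) (μ : List ℕ) (hpos : ∀ x ∈ μ, 0 < x) (hsum : μ.sum = n)
    (P a b c u u' w x y d : Equiv.Perm (Fin n)) (hP : P = canonPerm n μ 0)
    (hc : c ∈ midpts 1 P)
    (hab : orderedCycleType (a⁻¹ * b) = μ)
    (hu : IsConjugator P (a⁻¹ * b) u)
    (hu' : IsConjugator P (c⁻¹ * (c⁻¹ * P)) u')
    (hx : x = a * u * c * u⁻¹) (hy : y = a * u * (c⁻¹ * P) * u⁻¹)
    (hd : d = u'⁻¹ * c⁻¹ * u')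
    (hw : IsConjugator P (x⁻¹ * y) w) :
    x * w * d * w⁻¹ = a ∧ x * w * (d⁻¹ * P) * w⁻¹ = b :=
  stmt16_general n P a b c u u' w x y d hc hu hu' hx hy hd hw
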